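/- arXiv:2412.02162 — 4 statements merged into one kernel-verified Lean document; each statement's English description precedes it below -/
import Mathlib

section
/- For every α ∈ (0,1), the Sibuya probability mass function sums to one: Σ_{k=1}^{∞} α·Γ(k−α)/(Γ(1−α)·Γ(k+1)) = 1, and each term is strictly positive. -/
open Real

/-- The Sibuya probability mass function with parameter `α ∈ (0,1)`:
`p_α(k) = α·Γ(k−α)/(Γ(1−α)·Γ(k+1))` for integers `k ≥ 1`. -/
noncomputable def sibuyaPMF (α : ℝ) (k : ℕ) : ℝ :=
  α * Real.Gamma ((k : ℝ) - α) / (Real.Gamma (1 - α) * Real.Gamma ((k : ℝ) + 1))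

/-- For every `α ∈ (0,1)`, each term of the Sibuya probability mass function is strictly
positive and the mass function sums to one: `Σ_{k=1}^∞ α·Γ(k−α)/(Γ(1−α)·Γ(k+1)) = 1`. -/
theorem sibuya_pmf_sums_to_one (α : ℝ) (hα : α ∈ Set.Ioo (0 : ℝ) 1) :
    (∀ k : ℕ, 1 ≤ k → 0 < sibuyaPMF α k) ∧
    HasSum (fun k : ℕ => sibuyaPMF α (k + 1)) 1 := by
  obtain ⟨h0, h1⟩ := hα
  have hG1 : 0 < Real.Gamma (1 - α) := Real.Gamma_pos_of_pos (by linarith)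
  set q : ℕ → ℝ := fun n =>
    Real.Gamma ((n : ℝ) + 1 - α) / (Real.Gamma (1 - α) * Real.Gamma ((n : ℝ) + 1)) with hqdef
  have hqpos : ∀ n : ℕ, 0 < q n := by
    intro n
    have h1' : (0 : ℝ) < (n : ℝ) + 1 - α := by
      have : (0 : ℝ) ≤ (n : ℝ) := Nat.cast_nonneg n
      linarith
    have h2' : (0 : ℝ) < (n : ℝ) + 1 := by positivity
    exact div_pos (Real.Gamma_pos_of_pos h1')
      (mul_pos hG1 (Real.Gamma_pos_of_pos h2'))
  have hq0 : q 0 = 1 := by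
    simp [hqdef, Real.Gamma_one]
    field_simp
    exact hG1.ne'
  have hGadd : ∀ n : ℕ,
      Real.Gamma (((n : ℝ) + 1) + 1 - α) = ((n : ℝ) + 1 - α) * Real.Gamma ((n : ℝ) + 1 - α) := by
    intro n
    have hne : (n : ℝ) + 1 - α ≠ 0 := by
      have : (0 : ℝ) ≤ (n : ℝ) := Nat.cast_nonneg n
      intro h; linarith [sub_eq_zero.mp h]
    have := Real.Gamma_add_one hne
    rw [← this]; ring_nf
  have hGadd2 : ∀ n : ℕ,
      Real.Gamma (((n : ℝ) + 1) + 1) = ((n : ℝ) + 1) * Real.Gamma ((n : ℝ) + 1) := by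
    intro n
    have hne : (n : ℝ) + 1 ≠ 0 := by positivity
    exact Real.Gamma_add_one hne
  have hqrec : ∀ n : ℕ, q (n + 1) = q n * (((n : ℝ) + 1 - α) / ((n : ℝ) + 1)) := by
    intro n
    have hGn : 0 < Real.Gamma ((n : ℝ) + 1) := Real.Gamma_pos_of_pos (by positivity)
    have hcast : ((n + 1 : ℕ) : ℝ) = (n : ℝ) + 1 := by push_cast; ring
    simp only [hqdef, hcast, hGadd n, hGadd2 n]
    field_simp
  have hterm : ∀ k : ℕ, sibuyaPMF α (k + 1) = q k - q (k + 1) := by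
    intro k
    rw [hqrec k]
    have hGn : 0 < Real.Gamma ((k : ℝ) + 1) := Real.Gamma_pos_of_pos (by positivity)
    have hcast : ((k + 1 : ℕ) : ℝ) = (k : ℝ) + 1 := by push_cast; ring
    simp only [sibuyaPMF, hcast, hqdef, hGadd2 k]
    have h1' : ((k : ℝ) + 1) - α = (k : ℝ) + 1 - α := by ring
    field_simp
    ring
  have hpos : ∀ k : ℕ, 1 ≤ k → 0 < sibuyaPMF α k := by
    intro k hk
    have hk1 : (1 : ℝ) ≤ (k : ℝ) := by exact_mod_cast hk
    have hGa : 0 < Real.Gamma ((k : ℝ) - α) := Real.Gamma_pos_of_pos (by linarith)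
    have hGb : 0 < Real.Gamma ((k : ℝ) + 1) := Real.Gamma_pos_of_pos (by linarith)
    exact div_pos (mul_pos h0 hGa) (mul_pos hG1 hGb)
  refine ⟨hpos, ?_⟩
  -- bound: q n ≤ exp (-α * H n)
  have hbound : ∀ n : ℕ,
      q n ≤ Real.exp (-α * ∑ j ∈ Finset.range n, (1 : ℝ) / ((j : ℝ) + 1)) := by
    intro n
    induction n with
    | zero => simp [hq0]
    | succ n ih =>
      rw [hqrec n, Finset.sum_range_succ, mul_add, Real.exp_add]
      have hfac : ((n : ℝ) + 1 - α) / ((n : ℝ) + 1) ≤ Real.exp (-α * (1 / ((n : ℝ) + 1))) := by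
        have hn1 : (0 : ℝ) < (n : ℝ) + 1 := by positivity
        have h := Real.add_one_le_exp (-α * (1 / ((n : ℝ) + 1)))
        have heq : ((n : ℝ) + 1 - α) / ((n : ℝ) + 1) = -α * (1 / ((n : ℝ) + 1)) + 1 := by
          field_simp; ring
        rw [heq]; exact h
      have hfac0 : (0 : ℝ) ≤ ((n : ℝ) + 1 - α) / ((n : ℝ) + 1) := by
        have : (0 : ℝ) ≤ (n : ℝ) := Nat.cast_nonneg n
        apply div_nonneg <;> linarith
      exact mul_le_mul ih hfac hfac0 (Real.exp_nonneg _)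
  have hH : Filter.Tendsto (fun n : ℕ => ∑ j ∈ Finset.range n, (1 : ℝ) / ((j : ℝ) + 1))
      Filter.atTop Filter.atTop := tendsto_sum_range_one_div_nat_succ_atTop
  have hexp : Filter.Tendsto
      (fun n : ℕ => Real.exp (-α * ∑ j ∈ Finset.range n, (1 : ℝ) / ((j : ℝ) + 1)))
      Filter.atTop (nhds 0) := by
    apply Real.tendsto_exp_atBot.comp
    apply Filter.Tendsto.const_mul_atTop_of_neg (by linarith : -α < 0) hH
  have hq0' : Filter.Tendsto q Filter.atTop (nhds 0) :=
    squeeze_zero (fun n => (hqpos n).le) hbound hexp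
  rw [hasSum_iff_tendsto_nat_of_nonneg (fun k => (hpos (k + 1) (Nat.le_add_left 1 k)).le)]
  have htel : ∀ n : ℕ, ∑ i ∈ Finset.range n, sibuyaPMF α (i + 1) = 1 - q n := by
    intro n
    calc ∑ i ∈ Finset.range n, sibuyaPMF α (i + 1)
        = ∑ i ∈ Finset.range n, (q i - q (i + 1)) := Finset.sum_congr rfl (fun i _ => hterm i)
      _ = q 0 - q n := Finset.sum_range_sub' q n
      _ = 1 - q n := by rw [hq0]
  simp only [htel]
  have := Filter.Tendsto.const_sub (1 : ℝ) hq0'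
  simpa using this
end

section
/- Let α ∈ (0,1) and z, w ∈ ℂ with |z| < 1 and |w| < 1. Then the function r ↦ α·r^{−α−1}·e^{−r}·Σ_{k≥1} log(1−z^k)·log(1−w^k)·r^k/k! is Lebesgue integrable on (0,∞) and α·∫₀^∞ Σ_{k≥1} log(1−z^k)·log(1−w^k)·(r^k/k!)·e^{−r}·r^{−α−1} dr = Γ(1−α)·Σ_{k≥1} log(1−z^k)·log(1−w^k)·p_α(k), where the series on the right converges absolutely. -/
open Real MeasureTheory

namespace SibuyaAux
open Set

lemma log_bound {v : ℂ} (hv : ‖v‖ < 1) :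
    ‖Complex.log (1 - v)‖ ≤ ((1 - ‖v‖)⁻¹ / 2 + 1) * ‖v‖ := by
  have h1 : (1 : ℂ) - v = 1 + (-v) := by ring
  have hv' : ‖-v‖ < 1 := by simpa using hv
  have h := Complex.norm_log_one_add_le hv'
  rw [← h1] at h
  simp only [norm_neg] at h
  have hsq : ‖v‖ ^ 2 ≤ ‖v‖ := by
    nlinarith [norm_nonneg v]
  have hinv : (0:ℝ) ≤ (1 - ‖v‖)⁻¹ := by
    have : (0:ℝ) < 1 - ‖v‖ := by linarith
    positivity
  calc ‖Complex.log (1 - v)‖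
      ≤ ‖v‖ ^ 2 * (1 - ‖v‖)⁻¹ / 2 + ‖v‖ := h
    _ ≤ ‖v‖ * (1 - ‖v‖)⁻¹ / 2 + ‖v‖ := by gcongr
    _ = ((1 - ‖v‖)⁻¹ / 2 + 1) * ‖v‖ := by ring

lemma gamma_le {α : ℝ} (h0 : 0 < α) (h1 : α < 1) (n : ℕ) :
    Real.Gamma ((n : ℝ) + 1 - α) ≤ Real.Gamma (1 - α) * n.factorial := by
  induction n with
  | zero => simp
  | succ n ih =>
    have hpos : (0:ℝ) < (n : ℝ) + 1 - α := by
      have : (0:ℝ) ≤ (n:ℝ) := Nat.cast_nonneg n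
      linarith
    have key : ((n+1 : ℕ) : ℝ) + 1 - α = ((n : ℝ) + 1 - α) + 1 := by push_cast; ring
    rw [key, Real.Gamma_add_one hpos.ne']
    have hG := Real.Gamma_pos_of_pos hpos
    calc ((n : ℝ) + 1 - α) * Real.Gamma ((n : ℝ) + 1 - α)
        ≤ ((n:ℝ) + 1) * (Real.Gamma (1 - α) * n.factorial) := by
          apply mul_le_mul (by linarith) ih hG.le (by positivity)
      _ = Real.Gamma (1 - α) * ((n+1 : ℕ).factorial) := by
          rw [Nat.factorial_succ]; push_cast; ring

lemma gamma_le' {α : ℝ} (h0 : 0 < α) (h1 : α < 1) (n : ℕ) :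
    Real.Gamma ((n : ℝ) + 1 - α) ≤ Real.Gamma (1 - α) * (n+1).factorial := by
  refine (gamma_le h0 h1 n).trans ?_
  have hG : 0 < Real.Gamma (1 - α) := Real.Gamma_pos_of_pos (by linarith)
  have : (n.factorial : ℝ) ≤ ((n+1).factorial : ℝ) := by
    exact_mod_cast Nat.factorial_le (Nat.le_succ n)
  nlinarith

noncomputable def C (z w : ℂ) (k : ℕ) : ℂ :=
  Complex.log (1 - z ^ (k + 1)) * Complex.log (1 - w ^ (k + 1))

noncomputable def M (z w : ℂ) : ℝ :=
  ((1 - ‖z‖)⁻¹ / 2 + 1) * ((1 - ‖w‖)⁻¹ / 2 + 1)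

noncomputable def q (z w : ℂ) : ℝ := ‖z‖ * ‖w‖

lemma q_nonneg (z w : ℂ) : 0 ≤ q z w :=
  mul_nonneg (norm_nonneg z) (norm_nonneg w)

lemma q_lt_one {z w : ℂ} (hz : ‖z‖ < 1) (hw : ‖w‖ < 1) : q z w < 1 := by
  have h1 : q z w ≤ ‖z‖ * 1 :=
    mul_le_mul_of_nonneg_left hw.le (norm_nonneg z)
  calc q z w ≤ ‖z‖ * 1 := h1
    _ = ‖z‖ := mul_one _
    _ < 1 := hz

lemma M_nonneg {z w : ℂ} (hz : ‖z‖ < 1) (hw : ‖w‖ < 1) : 0 ≤ M z w := by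
  have h1 : (0:ℝ) < 1 - ‖z‖ := by linarith
  have h2 : (0:ℝ) < 1 - ‖w‖ := by linarith
  unfold M; positivity

lemma single_log_bound {z : ℂ} (hz : ‖z‖ < 1) (k : ℕ) :
    ‖Complex.log (1 - z ^ (k + 1))‖ ≤
      ((1 - ‖z‖)⁻¹ / 2 + 1) * ‖z‖ ^ (k + 1) := by
  have habs : ‖z ^ (k + 1)‖ = ‖z‖ ^ (k + 1) := norm_pow _ _
  have hle : ‖z‖ ^ (k + 1) ≤ ‖z‖ :=
    pow_le_of_le_one (norm_nonneg z) hz.le (Nat.succ_ne_zero k)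
  have hlt : ‖z ^ (k + 1)‖ < 1 := by rw [habs]; exact lt_of_le_of_lt hle hz
  have h := log_bound hlt
  rw [habs] at h
  refine h.trans ?_
  have hinvle : (1 - ‖z‖ ^ (k+1))⁻¹ ≤ (1 - ‖z‖)⁻¹ :=
    inv_anti₀ (by linarith) (by linarith)
  have : (0:ℝ) ≤ ‖z‖ ^ (k+1) := pow_nonneg (norm_nonneg z) _
  gcongr

lemma C_bound {z w : ℂ} (hz : ‖z‖ < 1) (hw : ‖w‖ < 1) (k : ℕ) :
    ‖C z w k‖ ≤ M z w * q z w ^ (k + 1) := by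
  have h1 := single_log_bound hz k
  have h2 := single_log_bound hw k
  have hz1 : (0:ℝ) < 1 - ‖z‖ := by linarith
  have hw1 : (0:ℝ) < 1 - ‖w‖ := by linarith
  have := mul_le_mul h1 h2 (norm_nonneg _) (by positivity)
  rw [← norm_mul] at this
  refine this.trans_eq ?_
  unfold M q
  rw [mul_pow]
  ring

noncomputable def g (α : ℝ) (z w : ℂ) (k : ℕ) (r : ℝ) : ℂ :=
  C z w k * ((r ^ (k + 1) / (k + 1).factorial : ℝ) : ℂ) *
    ((Real.exp (-r) * r ^ (-α - 1) : ℝ) : ℂ)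

noncomputable def F (α : ℝ) (k : ℕ) (r : ℝ) : ℝ :=
  Real.exp (-r) * r ^ ((k : ℝ) + 1 - α - 1)

variable {α : ℝ} {z w : ℂ}

lemma exp_pos' (hα1 : α < 1) (k : ℕ) : (0:ℝ) < (k : ℝ) + 1 - α := by
  have : (0:ℝ) ≤ (k:ℝ) := Nat.cast_nonneg k
  linarith

lemma F_integrable (hα1 : α < 1) (k : ℕ) :
    IntegrableOn (F α k) (Ioi (0:ℝ)) volume :=
  Real.GammaIntegral_convergent (exp_pos' hα1 k)

lemma F_integral (hα1 : α < 1) (k : ℕ) :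
    ∫ r in Ioi (0:ℝ), F α k r = Real.Gamma ((k:ℝ) + 1 - α) :=
  (Real.Gamma_eq_integral (exp_pos' hα1 k)).symm

lemma pow_mul_eq (k : ℕ) {r : ℝ} (hr : 0 < r) :
    r ^ (k + 1) * (Real.exp (-r) * r ^ (-α - 1)) = F α k r := by
  have h2 : r ^ (((k+1:ℕ)):ℝ) * r ^ (-α-1) = r ^ ((k:ℝ) + 1 - α - 1) := by
    rw [← Real.rpow_add hr]; congr 1; push_cast; ring
  calc r ^ (k+1) * (Real.exp (-r) * r ^ (-α-1))
      = Real.exp (-r) * (r ^ (((k+1:ℕ)):ℝ) * r ^ (-α-1)) := by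
        rw [Real.rpow_natCast]; ring
    _ = F α k r := by unfold F; rw [h2]

lemma g_eq (k : ℕ) {r : ℝ} (hr : 0 < r) :
    g α z w k r = (C z w k * (((k+1).factorial : ℝ) : ℂ)⁻¹) * ((F α k r : ℝ) : ℂ) := by
  rw [← pow_mul_eq k hr]
  unfold g
  push_cast
  ring

lemma g_integrable (hα1 : α < 1) (k : ℕ) :
    IntegrableOn (g α z w k) (Ioi (0:ℝ)) volume := by
  have h1 : IntegrableOn
      (fun r => (C z w k * (((k+1).factorial : ℝ) : ℂ)⁻¹) * ((F α k r : ℝ) : ℂ))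
      (Ioi (0:ℝ)) volume :=
    ((F_integrable hα1 k).ofReal.const_mul _)
  exact h1.congr_fun (fun r hr => (g_eq k hr).symm) measurableSet_Ioi

lemma g_norm_integral (hα1 : α < 1) (k : ℕ) :
    ∫ r in Ioi (0:ℝ), ‖g α z w k r‖ =
      ‖C z w k‖ / (k+1).factorial * Real.Gamma ((k:ℝ) + 1 - α) := by
  rw [← F_integral hα1 k, ← integral_const_mul]
  refine setIntegral_congr_fun measurableSet_Ioi (fun r hr => ?_)
  have hr : (0:ℝ) < r := hr
  have hF0 : 0 ≤ F α k r :=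
    mul_nonneg (Real.exp_nonneg _) (Real.rpow_nonneg hr.le _)
  rw [g_eq k hr]
  rw [norm_mul, norm_mul]
  simp only [Complex.norm_real, Real.norm_eq_abs, norm_inv, Complex.norm_natCast,
    Nat.abs_cast, abs_of_nonneg hF0]
  ring

lemma g_integral (hα1 : α < 1) (k : ℕ) :
    ∫ r in Ioi (0:ℝ), g α z w k r =
      C z w k * ((Real.Gamma ((k:ℝ) + 1 - α) / (k+1).factorial : ℝ) : ℂ) := by
  calc ∫ r in Ioi (0:ℝ), g α z w k r
      = ∫ r in Ioi (0:ℝ), (C z w k * (((k+1).factorial : ℝ) : ℂ)⁻¹) * ((F α k r : ℝ) : ℂ) :=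
        setIntegral_congr_fun measurableSet_Ioi (fun r hr => g_eq k hr)
    _ = (C z w k * (((k+1).factorial : ℝ) : ℂ)⁻¹) * ((∫ r in Ioi (0:ℝ), F α k r : ℝ) : ℂ) := by
        rw [integral_const_mul]
        congr 1
        exact integral_ofReal
    _ = C z w k * ((Real.Gamma ((k:ℝ) + 1 - α) / (k+1).factorial : ℝ) : ℂ) := by
        rw [F_integral hα1 k]; push_cast; ring

lemma geo_summable {z w : ℂ} (hz : ‖z‖ < 1) (hw : ‖w‖ < 1) :
    Summable (fun k : ℕ => q z w ^ (k+1)) := by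
  have h := (summable_geometric_of_lt_one (q_nonneg z w) (q_lt_one hz hw)).mul_left (q z w)
  simpa [pow_succ'] using h

lemma norm_integral_summable (hα0 : 0 < α) (hα1 : α < 1)
    (hz : ‖z‖ < 1) (hw : ‖w‖ < 1) :
    Summable (fun k : ℕ => ∫ r in Ioi (0:ℝ), ‖g α z w k r‖) := by
  have hb : Summable (fun k : ℕ => M z w * Real.Gamma (1 - α) * q z w ^ (k+1)) :=
    (geo_summable hz hw).mul_left _
  refine Summable.of_nonneg_of_le
    (fun k => integral_nonneg fun r => norm_nonneg _) (fun k => ?_) hb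
  rw [g_norm_integral hα1 k]
  have hG : (0:ℝ) < Real.Gamma ((k:ℝ) + 1 - α) := Real.Gamma_pos_of_pos (exp_pos' hα1 k)
  have hf : (0:ℝ) < ((k+1).factorial : ℝ) := by exact_mod_cast (k+1).factorial_pos
  have h1 := C_bound hz hw k
  have h2 := gamma_le' hα0 hα1 k
  have hM0 := M_nonneg hz hw
  have hq0 := q_nonneg z w
  have hA : ‖C z w k‖ / ((k+1).factorial : ℝ) ≤
      (M z w * q z w ^ (k+1)) / ((k+1).factorial : ℝ) := by gcongr ?_ / _
  calc ‖C z w k‖ / (k+1).factorial * Real.Gamma ((k:ℝ) + 1 - α)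
      ≤ (M z w * q z w ^ (k+1)) / (k+1).factorial * (Real.Gamma (1-α) * (k+1).factorial) :=
        mul_le_mul hA h2 hG.le (div_nonneg (mul_nonneg hM0 (pow_nonneg hq0 _)) hf.le)
    _ = M z w * Real.Gamma (1 - α) * q z w ^ (k+1) := by field_simp

lemma summable_norm_g (hz : ‖z‖ < 1) (hw : ‖w‖ < 1) (r : ℝ) :
    Summable (fun k : ℕ => ‖g α z w k r‖) := by
  set E := |Real.exp (-r) * r ^ (-α - 1)| with hE
  have hb : Summable (fun k : ℕ =>
      (M z w * E) * ((q z w * |r|) ^ (k+1) / ((k+1).factorial : ℝ))) := by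
    have h0 : Summable (fun n : ℕ => (q z w * |r|) ^ n / (n.factorial : ℝ)) :=
      Real.summable_pow_div_factorial _
    exact (((summable_nat_add_iff 1).mpr h0)).mul_left _
  refine Summable.of_nonneg_of_le (fun k => norm_nonneg _) (fun k => ?_) hb
  have habs : |r ^ (k+1) / ((k+1).factorial : ℝ)| = |r| ^ (k+1) / ((k+1).factorial : ℝ) := by
    rw [abs_div, abs_pow, Nat.abs_cast]
  unfold g
  rw [norm_mul, norm_mul]
  simp only [Complex.norm_real, Real.norm_eq_abs, habs, ← hE]
  have h1 := C_bound hz hw k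
  have hE0 : 0 ≤ E := abs_nonneg _
  have hD0 : (0:ℝ) ≤ |r| ^ (k+1) / ((k+1).factorial : ℝ) := by positivity
  calc ‖C z w k‖ * (|r| ^ (k+1) / ((k+1).factorial : ℝ)) * E
      ≤ (M z w * q z w ^ (k+1)) * (|r| ^ (k+1) / ((k+1).factorial : ℝ)) * E :=
        mul_le_mul_of_nonneg_right (mul_le_mul_of_nonneg_right h1 hD0) hE0
    _ = (M z w * E) * ((q z w * |r|) ^ (k+1) / ((k+1).factorial : ℝ)) := by
        rw [mul_pow]; ring

lemma summable_g (hz : ‖z‖ < 1) (hw : ‖w‖ < 1) (r : ℝ) :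
    Summable (fun k : ℕ => g α z w k r) :=
  (summable_norm_g hz hw r).of_norm

lemma g_continuousOn (k : ℕ) : ContinuousOn (g α z w k) (Ioi (0:ℝ)) := by
  unfold g
  have hrpow : ContinuousOn (fun r : ℝ => r ^ (-α - 1)) (Ioi (0:ℝ)) := fun x hx =>
    (Real.continuousAt_rpow_const x _ (Or.inl (ne_of_gt hx))).continuousWithinAt
  refine ContinuousOn.mul (ContinuousOn.mul continuousOn_const ?_) ?_
  · exact Complex.continuous_ofReal.comp_continuousOn
      (((continuous_pow (k+1)).continuousOn).div_const _)
  · exact Complex.continuous_ofReal.comp_continuousOn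
      (((Real.continuous_exp.comp continuous_neg).continuousOn).mul hrpow)

lemma tsum_aesm (hz : ‖z‖ < 1) (hw : ‖w‖ < 1) :
    AEStronglyMeasurable (fun r => ∑' k, g α z w k r) (volume.restrict (Ioi (0:ℝ))) := by
  have hm : ∀ n : ℕ, AEStronglyMeasurable (fun r => ∑ k ∈ Finset.range n, g α z w k r)
      (volume.restrict (Ioi (0:ℝ))) := by
    intro n
    have : ContinuousOn (fun r => ∑ k ∈ Finset.range n, g α z w k r) (Ioi (0:ℝ)) := by
      apply continuousOn_finset_sum
      intro k _
      exact g_continuousOn k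
    exact this.aestronglyMeasurable measurableSet_Ioi
  refine aestronglyMeasurable_of_tendsto_ae Filter.atTop hm ?_
  refine Filter.Eventually.of_forall (fun r => ?_)
  exact (summable_g hz hw r).hasSum.tendsto_sum_nat

lemma tsum_norm_bound (hα0 : 0 < α) (hα1 : α < 1)
    (hz : ‖z‖ < 1) (hw : ‖w‖ < 1) {r : ℝ} (hr : 0 < r) :
    ∑' k, ‖g α z w k r‖ ≤
      (M z w * q z w) * (r ^ (-α) * Real.exp (-((1 - q z w) * r))) := by
  have hM0 := M_nonneg hz hw
  have hq0 := q_nonneg z w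
  have hE0 : (0:ℝ) ≤ Real.exp (-r) * r ^ (-α-1) :=
    mul_nonneg (Real.exp_nonneg _) (Real.rpow_nonneg hr.le _)
  have hterm : ∀ k : ℕ, ‖g α z w k r‖ ≤
      (M z w * q z w * r * (Real.exp (-r) * r ^ (-α-1))) * ((q z w * r) ^ k / k.factorial) := by
    intro k
    have habs : |r ^ (k+1) / ((k+1).factorial : ℝ)| = r ^ (k+1) / ((k+1).factorial : ℝ) := by
      rw [abs_of_nonneg]; positivity
    unfold g
    rw [norm_mul, norm_mul]
    simp only [Complex.norm_real, Real.norm_eq_abs, habs, abs_of_nonneg hE0]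
    have h1 := C_bound hz hw k
    have hfle : (k.factorial : ℝ) ≤ ((k+1).factorial : ℝ) := by
      exact_mod_cast Nat.factorial_le (Nat.le_succ k)
    have hf0 : (0:ℝ) < (k.factorial : ℝ) := by exact_mod_cast k.factorial_pos
    calc ‖C z w k‖ * (r ^ (k+1) / ((k+1).factorial : ℝ)) * (Real.exp (-r) * r ^ (-α-1))
        ≤ (M z w * q z w ^ (k+1)) * (r ^ (k+1) / (k.factorial : ℝ)) * (Real.exp (-r) * r ^ (-α-1)) := by
          gcongr
      _ = (M z w * q z w * r * (Real.exp (-r) * r ^ (-α-1))) * ((q z w * r) ^ k / k.factorial) := by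
          rw [mul_pow]; ring_nf
  refine Real.tsum_le_of_sum_range_le (fun k => norm_nonneg _) (fun n => ?_)
  have hnn : (0:ℝ) ≤ M z w * q z w * r * (Real.exp (-r) * r ^ (-α-1)) := by positivity
  calc ∑ k ∈ Finset.range n, ‖g α z w k r‖
      ≤ ∑ k ∈ Finset.range n,
          (M z w * q z w * r * (Real.exp (-r) * r ^ (-α-1))) * ((q z w * r) ^ k / k.factorial) :=
        Finset.sum_le_sum (fun k _ => hterm k)
    _ = (M z w * q z w * r * (Real.exp (-r) * r ^ (-α-1))) *
          ∑ k ∈ Finset.range n, (q z w * r) ^ k / k.factorial := by rw [Finset.mul_sum]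
    _ ≤ (M z w * q z w * r * (Real.exp (-r) * r ^ (-α-1))) * Real.exp (q z w * r) :=
        mul_le_mul_of_nonneg_left (Real.sum_le_exp_of_nonneg (by positivity) n) hnn
    _ = (M z w * q z w) * (r ^ (-α) * Real.exp (-((1 - q z w) * r))) := by
        have h1 : r * r ^ (-α-1) = r ^ (-α) := by
          nth_rewrite 1 [← Real.rpow_one r]
          rw [← Real.rpow_add hr]
          norm_num
        have h2 : Real.exp (-r) * Real.exp (q z w * r) = Real.exp (-((1 - q z w) * r)) := by
          rw [← Real.exp_add]; congr 1; ring
        rw [← h1, ← h2]; ring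

lemma bound_integrable (hα0 : 0 < α) (hα1 : α < 1)
    (hz : ‖z‖ < 1) (hw : ‖w‖ < 1) :
    IntegrableOn (fun r : ℝ =>
      (M z w * q z w) * (r ^ (-α) * Real.exp (-((1 - q z w) * r)))) (Ioi (0:ℝ)) volume := by
  have hb : (0:ℝ) < 1 - q z w := by
    have := q_lt_one hz hw; linarith
  have h := integrableOn_rpow_mul_exp_neg_mul_rpow
    (show (-1:ℝ) < -α by linarith) (show (0:ℝ) < 1 by norm_num) hb
  simp only [Real.rpow_one, neg_mul] at h
  exact h.const_mul _

lemma tsum_integrable (hα0 : 0 < α) (hα1 : α < 1)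
    (hz : ‖z‖ < 1) (hw : ‖w‖ < 1) :
    IntegrableOn (fun r => ∑' k, g α z w k r) (Ioi (0:ℝ)) volume := by
  refine Integrable.mono' (bound_integrable hα0 hα1 hz hw) (tsum_aesm hz hw) ?_
  refine (ae_restrict_iff' measurableSet_Ioi).2 (Filter.Eventually.of_forall (fun r hr => ?_))
  exact (norm_tsum_le_tsum_norm (summable_norm_g hz hw r)).trans
    (tsum_norm_bound hα0 hα1 hz hw hr)

lemma sibuya_eq (hα0 : 0 < α) (hα1 : α < 1) (k : ℕ) :
    Real.Gamma (1 - α) * sibuyaPMF α (k+1) =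
      α * (Real.Gamma ((k:ℝ) + 1 - α) / (k+1).factorial) := by
  unfold sibuyaPMF
  have h1 : Real.Gamma (((k+1:ℕ):ℝ) + 1) = ((k+1).factorial : ℝ) :=
    Real.Gamma_nat_eq_factorial (k+1)
  have h2 : ((k+1:ℕ):ℝ) - α = (k:ℝ) + 1 - α := by push_cast; ring
  rw [h1, h2]
  have hG : Real.Gamma (1-α) ≠ 0 := (Real.Gamma_pos_of_pos (by linarith)).ne'
  have hf : ((k+1).factorial : ℝ) ≠ 0 := by
    exact_mod_cast (k+1).factorial_pos.ne'
  field_simp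

lemma sibuya_nonneg (hα0 : 0 < α) (hα1 : α < 1) (k : ℕ) :
    0 ≤ sibuyaPMF α (k+1) := by
  unfold sibuyaPMF
  have h1 : (0:ℝ) < Real.Gamma (((k+1:ℕ):ℝ) - α) := by
    apply Real.Gamma_pos_of_pos
    have : (0:ℝ) ≤ (k:ℝ) := Nat.cast_nonneg k
    push_cast
    linarith
  have h2 : (0:ℝ) < Real.Gamma (1 - α) := Real.Gamma_pos_of_pos (by linarith)
  have h3 : (0:ℝ) < Real.Gamma (((k+1:ℕ):ℝ) + 1) := by
    apply Real.Gamma_pos_of_pos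
    positivity
  positivity

lemma sibuya_le (hα0 : 0 < α) (hα1 : α < 1) (k : ℕ) :
    sibuyaPMF α (k+1) ≤ α := by
  have hG : (0:ℝ) < Real.Gamma (1-α) := Real.Gamma_pos_of_pos (by linarith)
  have hf : (0:ℝ) < ((k+1).factorial : ℝ) := by exact_mod_cast (k+1).factorial_pos
  have key := sibuya_eq hα0 hα1 k
  have h2 := gamma_le' hα0 hα1 k
  have : Real.Gamma (1 - α) * sibuyaPMF α (k+1) ≤ Real.Gamma (1 - α) * α := by
    rw [key]
    calc α * (Real.Gamma ((k:ℝ) + 1 - α) / (k+1).factorial)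
        ≤ α * ((Real.Gamma (1-α) * (k+1).factorial) / (k+1).factorial) := by
          gcongr
      _ = Real.Gamma (1 - α) * α := by field_simp
  exact le_of_mul_le_mul_left (by linarith [this]) hG

end SibuyaAux

open SibuyaAux Set

/-- For `α ∈ (0,1)` and `|z|, |w| < 1`, the function
`r ↦ α·r^{−α−1}·e^{−r}·Σ_{k≥1} log(1−z^k)·log(1−w^k)·r^k/k!` is Lebesgue integrable on
`(0,∞)`, the series `Σ_{k≥1} log(1−z^k)·log(1−w^k)·p_α(k)` converges absolutely, and
`α·∫₀^∞ Σ_{k≥1} log(1−z^k)·log(1−w^k)·(r^k/k!)·e^{−r}·r^{−α−1} dr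
  = Γ(1−α)·Σ_{k≥1} log(1−z^k)·log(1−w^k)·p_α(k)`. -/
theorem sibuya_integral_identity (α : ℝ) (hα : α ∈ Set.Ioo (0 : ℝ) 1)
    (z w : ℂ) (hz : ‖z‖ < 1) (hw : ‖w‖ < 1) :
    IntegrableOn
      (fun r : ℝ => ((α * r ^ (-α - 1) * Real.exp (-r) : ℝ) : ℂ) *
        ∑' k : ℕ, Complex.log (1 - z ^ (k + 1)) * Complex.log (1 - w ^ (k + 1)) *
          ((r ^ (k + 1) / (k + 1).factorial : ℝ) : ℂ))
      (Set.Ioi (0 : ℝ)) MeasureTheory.volume ∧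
    Summable (fun k : ℕ => ‖Complex.log (1 - z ^ (k + 1)) *
        Complex.log (1 - w ^ (k + 1)) * (sibuyaPMF α (k + 1) : ℂ)‖) ∧
    (α : ℂ) * ∫ r in Set.Ioi (0 : ℝ),
        (∑' k : ℕ, Complex.log (1 - z ^ (k + 1)) * Complex.log (1 - w ^ (k + 1)) *
            ((r ^ (k + 1) / (k + 1).factorial : ℝ) : ℂ)) *
          ((Real.exp (-r) * r ^ (-α - 1) : ℝ) : ℂ) =
      (Real.Gamma (1 - α) : ℂ) *
        ∑' k : ℕ, Complex.log (1 - z ^ (k + 1)) * Complex.log (1 - w ^ (k + 1)) *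
          (sibuyaPMF α (k + 1) : ℂ) := by
  obtain ⟨hα0, hα1⟩ := hα
  refine ⟨?_, ?_, ?_⟩
  · -- integrability
    have hfun : (fun r : ℝ => ((α * r ^ (-α - 1) * Real.exp (-r) : ℝ) : ℂ) *
        ∑' k : ℕ, Complex.log (1 - z ^ (k + 1)) * Complex.log (1 - w ^ (k + 1)) *
          ((r ^ (k + 1) / (k + 1).factorial : ℝ) : ℂ))
        = fun r => (α : ℂ) * ∑' k, g α z w k r := by
      funext r
      have ht : ∑' k, g α z w k r =
          (∑' k : ℕ, C z w k * ((r ^ (k + 1) / (k + 1).factorial : ℝ) : ℂ)) *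
            ((Real.exp (-r) * r ^ (-α - 1) : ℝ) : ℂ) := tsum_mul_right
      rw [ht]
      simp only [C]
      push_cast
      ring
    rw [hfun]
    exact (tsum_integrable hα0 hα1 hz hw).const_mul _
  · -- summability
    have hb : Summable (fun k : ℕ => (M z w * α) * q z w ^ (k+1)) :=
      (geo_summable hz hw).mul_left _
    refine Summable.of_nonneg_of_le (fun k => norm_nonneg _) (fun k => ?_) hb
    have h1 : ‖Complex.log (1 - z ^ (k + 1)) * Complex.log (1 - w ^ (k + 1)) *
        (sibuyaPMF α (k + 1) : ℂ)‖ = ‖C z w k‖ * sibuyaPMF α (k+1) := by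
      rw [norm_mul, Complex.norm_real, Real.norm_eq_abs, abs_of_nonneg (sibuya_nonneg hα0 hα1 k)]
      simp only [C]
    rw [h1]
    calc ‖C z w k‖ * sibuyaPMF α (k+1)
        ≤ (M z w * q z w ^ (k+1)) * α :=
          mul_le_mul (C_bound hz hw k) (sibuya_le hα0 hα1 k)
            (sibuya_nonneg hα0 hα1 k) (mul_nonneg (M_nonneg hz hw) (pow_nonneg (q_nonneg z w) _))
      _ = (M z w * α) * q z w ^ (k+1) := by ring
  · -- the identity
    have hswap := MeasureTheory.integral_tsum_of_summable_integral_norm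
      (fun k => g_integrable (α := α) (z := z) (w := w) hα1 k)
      (norm_integral_summable hα0 hα1 hz hw)
    have hI : ∫ r in Ioi (0:ℝ),
        (∑' k : ℕ, Complex.log (1 - z ^ (k + 1)) * Complex.log (1 - w ^ (k + 1)) *
            ((r ^ (k + 1) / (k + 1).factorial : ℝ) : ℂ)) *
          ((Real.exp (-r) * r ^ (-α - 1) : ℝ) : ℂ)
        = ∑' k, ∫ r in Ioi (0:ℝ), g α z w k r := by
      rw [hswap]
      refine setIntegral_congr_fun measurableSet_Ioi (fun r _ => ?_)
      simp only [g, C]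
      exact (tsum_mul_right).symm
    rw [hI]
    have hterm : ∀ k : ℕ, ∫ r in Ioi (0:ℝ), g α z w k r =
        C z w k * ((Real.Gamma ((k:ℝ) + 1 - α) / (k+1).factorial : ℝ) : ℂ) :=
      fun k => g_integral hα1 k
    rw [tsum_congr hterm]
    rw [← tsum_mul_left, ← tsum_mul_left]
    refine tsum_congr (fun k => ?_)
    have hp := sibuya_eq (α := α) hα0 hα1 k
    have hpC := congrArg (fun x : ℝ => (x : ℂ)) hp
    push_cast at hpC
    simp only [C]
    push_cast
    linear_combination (-(Complex.log (1 - z ^ (k + 1)) * Complex.log (1 - w ^ (k + 1)))) * hpC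
end

section
/- Let α ∈ (0,1) and z, w ∈ ℂ with |z| < 1 and |w| < 1. Then Σ_{k≥1} log(1−z^k)·log(1−w^k)·p_α(k) = Σ_{u≥1} Σ_{v≥1} (1/(uv))·S_α(z^u·w^v), where both sides converge absolutely. -/
open Real

/-- The probability generating function `S_α(x) = Σ_{k≥1} p_α(k)·x^k` of the Sibuya
distribution, for `|x| < 1`. -/
noncomputable def sibuyaPGF (α : ℝ) (x : ℂ) : ℂ :=
  ∑' k : ℕ, (sibuyaPMF α (k + 1) : ℂ) * x ^ (k + 1)

lemma sibuyaPMF_nonneg {α : ℝ} (hα : α ∈ Set.Ioo (0:ℝ) 1) (k : ℕ) :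
    0 ≤ sibuyaPMF α (k + 1) := by
  obtain ⟨h0, h1⟩ := hα
  have h2 : (0:ℝ) < ((k+1:ℕ):ℝ) - α := by push_cast; linarith
  have h3 : (0:ℝ) < 1 - α := by linarith
  have h4 : (0:ℝ) < ((k+1:ℕ):ℝ) + 1 := by positivity
  unfold sibuyaPMF
  have := Real.Gamma_pos_of_pos h2
  have := Real.Gamma_pos_of_pos h3
  have := Real.Gamma_pos_of_pos h4
  positivity

lemma sibuyaPMF_succ {α : ℝ} (hα : α ∈ Set.Ioo (0:ℝ) 1) (n : ℕ) :
    sibuyaPMF α (n + 2) = (((n:ℝ) + 1 - α) / ((n:ℝ) + 2)) * sibuyaPMF α (n + 1) := by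
  obtain ⟨h0, h1⟩ := hα
  unfold sibuyaPMF
  push_cast
  have e1 : ((n:ℝ) + 2) - α = ((n:ℝ) + 1 - α) + 1 := by ring
  have e2 : ((n:ℝ) + 2) + 1 = (((n:ℝ) + 1) + 1) + 1 := by ring
  rw [e1, Real.Gamma_add_one (by linarith), e2, Real.Gamma_add_one (by positivity)]
  have hΓ1 : Real.Gamma (1 - α) ≠ 0 := (Real.Gamma_pos_of_pos (by linarith)).ne'
  have hΓ2 : Real.Gamma (((n:ℝ) + 1) + 1) ≠ 0 := (Real.Gamma_pos_of_pos (by positivity)).ne'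
  have hn2 : ((n:ℝ) + 2) ≠ 0 := by positivity
  field_simp
  ring

lemma sibuyaPMF_le {α : ℝ} (hα : α ∈ Set.Ioo (0:ℝ) 1) : ∀ n : ℕ, sibuyaPMF α (n + 1) ≤ α := by
  intro n
  induction n with
  | zero =>
      unfold sibuyaPMF
      have hΓ1 : Real.Gamma (1 - α) ≠ 0 := (Real.Gamma_pos_of_pos (by linarith [hα.2])).ne'
      rw [show (((1:ℕ):ℝ)) = 1 by norm_num]
      rw [show (1:ℝ) + 1 = 2 by norm_num, Real.Gamma_two]
      field_simp
      exact le_rfl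
  | succ n ih =>
      rw [show n + 1 + 1 = n + 2 from rfl, sibuyaPMF_succ hα n]
      have hp := sibuyaPMF_nonneg hα n
      have hfac0 : 0 ≤ ((n:ℝ) + 1 - α) / ((n:ℝ) + 2) := by
        apply div_nonneg _ (by positivity)
        have := hα.2; linarith
      have hfac : ((n:ℝ) + 1 - α) / ((n:ℝ) + 2) ≤ 1 := by
        rw [div_le_one (by positivity)]
        have := hα.1; linarith
      nlinarith

lemma hasSum_neg_log {x : ℂ} (hx : ‖x‖ < 1) :
    HasSum (fun u : ℕ => x ^ (u+1) / ((u:ℂ)+1)) (-Complex.log (1 - x)) := by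
  have h := Complex.hasSum_taylorSeries_neg_log (z := x) hx
  have h2 := (hasSum_nat_add_iff' (f := fun n : ℕ => x ^ n / (n:ℂ)) 1).mpr h
  simp only [Finset.range_one, Finset.sum_singleton, pow_zero, Nat.cast_zero, div_zero,
    sub_zero, Nat.cast_add, Nat.cast_one] at h2
  exact h2

lemma pgf_summable {α : ℝ} (hα : α ∈ Set.Ioo (0:ℝ) 1) {x : ℂ} (hx : ‖x‖ < 1) :
    Summable (fun k : ℕ => (sibuyaPMF α (k+1) : ℂ) * x ^ (k+1)) := by
  apply Summable.of_norm
  refine Summable.of_nonneg_of_le (fun _ => norm_nonneg _) (fun k => ?_)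
    (summable_geometric_of_lt_one (norm_nonneg x) hx)
  rw [norm_mul, norm_pow, Complex.norm_real, Real.norm_eq_abs]
  have h1 : |sibuyaPMF α (k+1)| ≤ 1 := by
    rw [abs_of_nonneg (sibuyaPMF_nonneg hα k)]
    exact (sibuyaPMF_le hα k).trans hα.2.le
  have h2 : ‖x‖ ^ (k+1) ≤ ‖x‖ ^ k :=
    pow_le_pow_of_le_one (norm_nonneg x) hx.le (Nat.le_succ k)
  nlinarith [pow_nonneg (norm_nonneg x) k, abs_nonneg (sibuyaPMF α (k+1))]
/-- Auxiliary triple-indexed summand. -/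
noncomputable def sibAux (α : ℝ) (z w : ℂ) : (ℕ × ℕ) × ℕ → ℂ := fun q =>
  (sibuyaPMF α (q.2+1) : ℂ) * ((z ^ (q.2+1)) ^ (q.1.1+1) / ((q.1.1:ℂ)+1)) *
    ((w ^ (q.2+1)) ^ (q.1.2+1) / ((q.1.2:ℂ)+1))

lemma sibAux_row {α : ℝ} (hα : α ∈ Set.Ioo (0:ℝ) 1) {z w : ℂ}
    (hz : ‖z‖ < 1) (hw : ‖w‖ < 1) (k : ℕ) :
    HasSum (fun uv : ℕ×ℕ => sibAux α z w (uv, k))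
      (Complex.log (1 - z ^ (k+1)) * Complex.log (1 - w ^ (k+1)) *
        (sibuyaPMF α (k+1) : ℂ)) := by
  have hzk : ‖z ^ (k+1)‖ < 1 := by
    rw [norm_pow]; exact pow_lt_one₀ (norm_nonneg z) hz (Nat.succ_ne_zero k)
  have hwk : ‖w ^ (k+1)‖ < 1 := by
    rw [norm_pow]; exact pow_lt_one₀ (norm_nonneg w) hw (Nat.succ_ne_zero k)
  have hA := hasSum_neg_log hzk
  have hB := hasSum_neg_log hwk
  have hAp := hA.mul_left (sibuyaPMF α (k+1) : ℂ)
  have h1 := summable_norm_iff.mpr hAp.summable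
  have h2 := summable_norm_iff.mpr hB.summable
  have hsab := summable_mul_of_summable_norm h1 h2
  have hmul := hAp.mul hB hsab
  rw [show ((sibuyaPMF α (k+1) : ℂ) * -Complex.log (1 - z ^ (k+1))) * -Complex.log (1 - w ^ (k+1))
      = Complex.log (1 - z ^ (k+1)) * Complex.log (1 - w ^ (k+1)) * (sibuyaPMF α (k+1) : ℂ)
    from by ring] at hmul
  exact hmul

lemma sibAux_col {α : ℝ} (hα : α ∈ Set.Ioo (0:ℝ) 1) {z w : ℂ}
    (hz : ‖z‖ < 1) (hw : ‖w‖ < 1) (uv : ℕ × ℕ) :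
    HasSum (fun k : ℕ => sibAux α z w (uv, k))
      ((1 / (((uv.1 + 1) : ℂ) * ((uv.2 + 1) : ℂ))) *
        sibuyaPGF α (z ^ (uv.1 + 1) * w ^ (uv.2 + 1))) := by
  obtain ⟨u, v⟩ := uv
  have hx : ‖z ^ (u+1) * w ^ (v+1)‖ < 1 := by
    rw [norm_mul, norm_pow, norm_pow]
    have h1 : ‖z‖ ^ (u+1) ≤ 1 := pow_le_one₀ (norm_nonneg z) hz.le
    have h2 : ‖w‖ ^ (v+1) < 1 :=
      pow_lt_one₀ (norm_nonneg w) hw (Nat.succ_ne_zero v)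
    nlinarith [pow_nonneg (norm_nonneg z) (u+1), pow_nonneg (norm_nonneg w) (v+1)]
  have hS : HasSum (fun k : ℕ => (sibuyaPMF α (k+1) : ℂ) * (z ^ (u+1) * w ^ (v+1)) ^ (k+1))
      (sibuyaPGF α (z ^ (u+1) * w ^ (v+1))) := (pgf_summable hα hx).hasSum
  have hS2 := hS.mul_left (1 / (((u:ℂ)+1) * ((v:ℂ)+1)))
  have hu : ((u:ℂ)+1) ≠ 0 := Nat.cast_add_one_ne_zero u
  have hv : ((v:ℂ)+1) ≠ 0 := Nat.cast_add_one_ne_zero v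
  have hfun : (fun k : ℕ => (1 / (((u:ℂ)+1) * ((v:ℂ)+1))) *
        ((sibuyaPMF α (k+1) : ℂ) * (z ^ (u+1) * w ^ (v+1)) ^ (k+1)))
      = (fun k : ℕ => sibAux α z w ((u, v), k)) := by
    funext k
    simp only [sibAux]
    rw [show (z^(k+1))^(u+1) = (z^(u+1))^(k+1) by rw [← pow_mul, ← pow_mul, Nat.mul_comm],
        show (w^(k+1))^(v+1) = (w^(v+1))^(k+1) by rw [← pow_mul, ← pow_mul, Nat.mul_comm],
        mul_pow]
    field_simp
  rw [← hfun]
  exact hS2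

lemma sibAux_norm_summable {α : ℝ} (hα : α ∈ Set.Ioo (0:ℝ) 1) {z w : ℂ}
    (hz : ‖z‖ < 1) (hw : ‖w‖ < 1) :
    Summable (fun q : (ℕ×ℕ)×ℕ => ‖sibAux α z w q‖) := by
  have ha0 : 0 ≤ ‖z‖ := norm_nonneg z
  have hb0 : 0 ≤ ‖w‖ := norm_nonneg w
  set a := ‖z‖ with ha_def
  set b := ‖w‖ with hb_def
  have hgeo_a : Summable (fun n : ℕ => a ^ n) := summable_geometric_of_lt_one ha0 hz
  have hgeo_b : Summable (fun n : ℕ => b ^ n) := summable_geometric_of_lt_one hb0 hw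
  have hgeo_ab := hgeo_a.mul_of_nonneg hgeo_b (fun _ => pow_nonneg ha0 _)
    (fun _ => pow_nonneg hb0 _)
  have hG : Summable (fun q : (ℕ×ℕ)×ℕ => (a ^ q.1.1 * b ^ q.1.2) * a ^ q.2) :=
    hgeo_ab.mul_of_nonneg hgeo_a
      (fun uv => mul_nonneg (pow_nonneg ha0 _) (pow_nonneg hb0 _))
      (fun _ => pow_nonneg ha0 _)
  refine Summable.of_nonneg_of_le (fun _ => norm_nonneg _) ?_ hG
  rintro ⟨⟨u, v⟩, k⟩
  have hp : ‖(sibuyaPMF α (k+1) : ℂ)‖ ≤ 1 := by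
    rw [Complex.norm_real, Real.norm_eq_abs, abs_of_nonneg (sibuyaPMF_nonneg hα k)]
    exact (sibuyaPMF_le hα k).trans hα.2.le
  have hu1 : (1:ℝ) ≤ ‖((u:ℂ)+1)‖ := by
    rw [show ((u:ℂ)+1) = ((u+1:ℕ):ℂ) by push_cast; ring, Complex.norm_natCast]
    exact_mod_cast Nat.one_le_iff_ne_zero.mpr (Nat.succ_ne_zero u)
  have hv1 : (1:ℝ) ≤ ‖((v:ℂ)+1)‖ := by
    rw [show ((v:ℂ)+1) = ((v+1:ℕ):ℂ) by push_cast; ring, Complex.norm_natCast]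
    exact_mod_cast Nat.one_le_iff_ne_zero.mpr (Nat.succ_ne_zero v)
  have hA : ‖(z ^ (k+1)) ^ (u+1) / ((u:ℂ)+1)‖ ≤ a ^ ((k+1)*(u+1)) := by
    rw [norm_div, norm_pow, norm_pow, ← ha_def, ← pow_mul]
    exact div_le_self (pow_nonneg ha0 _) hu1
  have hB : ‖(w ^ (k+1)) ^ (v+1) / ((v:ℂ)+1)‖ ≤ b ^ ((k+1)*(v+1)) := by
    rw [norm_div, norm_pow, norm_pow, ← hb_def, ← pow_mul]
    exact div_le_self (pow_nonneg hb0 _) hv1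
  have h1 : a ^ ((k+1)*(u+1)) ≤ a ^ (u+k) :=
    pow_le_pow_of_le_one ha0 hz.le (by nlinarith)
  have h2 : b ^ ((k+1)*(v+1)) ≤ b ^ v :=
    pow_le_pow_of_le_one hb0 hw.le (by nlinarith)
  calc ‖sibAux α z w ((u,v),k)‖
      = ‖(sibuyaPMF α (k+1) : ℂ)‖ * ‖(z ^ (k+1)) ^ (u+1) / ((u:ℂ)+1)‖ *
          ‖(w ^ (k+1)) ^ (v+1) / ((v:ℂ)+1)‖ := by
        simp only [sibAux, norm_mul]
    _ ≤ 1 * a ^ ((k+1)*(u+1)) * b ^ ((k+1)*(v+1)) := by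
        gcongr <;> first | exact norm_nonneg _ | positivity
    _ = a ^ ((k+1)*(u+1)) * b ^ ((k+1)*(v+1)) := by ring
    _ ≤ a ^ (u+k) * b ^ v := mul_le_mul h1 h2 (by positivity) (by positivity)
    _ = (a ^ u * b ^ v) * a ^ k := by rw [pow_add]; ring

/-- For `α ∈ (0,1)` and `|z|, |w| < 1`,
`Σ_{k≥1} log(1−z^k)·log(1−w^k)·p_α(k) = Σ_{u≥1} Σ_{v≥1} (1/(uv))·S_α(z^u·w^v)`,
where both sides converge absolutely. -/
theorem sibuya_log_series_double_sum (α : ℝ) (hα : α ∈ Set.Ioo (0 : ℝ) 1)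
    (z w : ℂ) (hz : ‖z‖ < 1) (hw : ‖w‖ < 1) :
    Summable (fun k : ℕ => ‖Complex.log (1 - z ^ (k + 1)) *
        Complex.log (1 - w ^ (k + 1)) * (sibuyaPMF α (k + 1) : ℂ)‖) ∧
    Summable (fun uv : ℕ × ℕ => ‖
        ((1 / (((uv.1 + 1) : ℂ) * ((uv.2 + 1) : ℂ))) *
          sibuyaPGF α (z ^ (uv.1 + 1) * w ^ (uv.2 + 1)))‖) ∧
    (∑' k : ℕ, Complex.log (1 - z ^ (k + 1)) * Complex.log (1 - w ^ (k + 1)) *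
        (sibuyaPMF α (k + 1) : ℂ)) =
      ∑' uv : ℕ × ℕ, (1 / (((uv.1 + 1) : ℂ) * ((uv.2 + 1) : ℂ))) *
        sibuyaPGF α (z ^ (uv.1 + 1) * w ^ (uv.2 + 1)) := by
  have hFnorm := sibAux_norm_summable hα hz hw
  have hF : Summable (sibAux α z w) := Summable.of_norm hFnorm
  have hFnorm' : Summable (fun p : ℕ × (ℕ×ℕ) => ‖sibAux α z w (p.2, p.1)‖) :=
    hFnorm.prod_symm
  refine ⟨?_, ?_, ?_⟩
  · have hslice : Summable (fun k : ℕ => ∑' uv : ℕ×ℕ, ‖sibAux α z w (uv, k)‖) :=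
      ((summable_prod_of_nonneg (fun _ => norm_nonneg _)).mp hFnorm').2
    refine Summable.of_nonneg_of_le (fun _ => norm_nonneg _) (fun k => ?_) hslice
    rw [← (sibAux_row hα hz hw k).tsum_eq]
    exact norm_tsum_le_tsum_norm (hFnorm'.prod_factor k)
  · have hslice : Summable (fun uv : ℕ×ℕ => ∑' k : ℕ, ‖sibAux α z w (uv, k)‖) :=
      ((summable_prod_of_nonneg (fun _ => norm_nonneg _)).mp hFnorm).2
    refine Summable.of_nonneg_of_le (fun _ => norm_nonneg _) (fun uv => ?_) hslice
    rw [← (sibAux_col hα hz hw uv).tsum_eq]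
    exact norm_tsum_le_tsum_norm (hFnorm.prod_factor uv)
  · have huncurry : Summable (Function.uncurry (fun uv k => sibAux α z w (uv, k))) := hF
    have h₁ : ∀ uv : ℕ×ℕ, Summable (fun k : ℕ => sibAux α z w (uv, k)) :=
      fun uv => (sibAux_col hα hz hw uv).summable
    have h₂ : ∀ k : ℕ, Summable (fun uv : ℕ×ℕ => sibAux α z w (uv, k)) :=
      fun k => (sibAux_row hα hz hw k).summable
    calc (∑' k : ℕ, Complex.log (1 - z ^ (k + 1)) * Complex.log (1 - w ^ (k + 1)) *
          (sibuyaPMF α (k + 1) : ℂ))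
        = ∑' k : ℕ, ∑' uv : ℕ×ℕ, sibAux α z w (uv, k) :=
          tsum_congr (fun k => ((sibAux_row hα hz hw k).tsum_eq).symm)
      _ = ∑' uv : ℕ×ℕ, ∑' k : ℕ, sibAux α z w (uv, k) := huncurry.tsum_comm' h₁ h₂
      _ = _ := tsum_congr (fun uv => (sibAux_col hα hz hw uv).tsum_eq)
end

section
/- Let ξ = (ξ_i)_{i≥1} be any sequence with ξ_i ∈ {0,1}, let j ≥ 1, and for n ≥ j define Ĉ_{n,j}(ξ) = Σ_{i=1}^{n−j} ξ_i·(1−ξ_{i+1})⋯(1−ξ_{i+j−1})·ξ_{i+j} + ξ_{n−j+1}·(1−ξ_{n−j+2})⋯(1−ξ_n) (for j = 1 the inner products over empty ranges equal 1). Then for all integers j ≤ m ≤ n one has Ĉ_{n,j}(ξ) ≥ Ĉ_{m,j}(ξ) − 1. -/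
open Finset

/-- Feller-coupling cycle-count statistic:
`Ĉ_{n,j}(ξ) = Σ_{i=1}^{n−j} ξ_i·(1−ξ_{i+1})⋯(1−ξ_{i+j−1})·ξ_{i+j}
  + ξ_{n−j+1}·(1−ξ_{n−j+2})⋯(1−ξ_n)`
(for `j = 1` the inner products over empty ranges equal `1`). -/
def fellerCycleCount (ξ : ℕ → ℤ) (n j : ℕ) : ℤ :=
  (∑ i ∈ Finset.Icc 1 (n - j),
      ξ i * (∏ l ∈ Finset.Icc 1 (j - 1), (1 - ξ (i + l))) * ξ (i + j)) +
    ξ (n - j + 1) * ∏ l ∈ Finset.Icc 1 (j - 1), (1 - ξ (n - j + 1 + l))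

/-- For any `{0,1}`-valued sequence `ξ`, any `j ≥ 1` and any `j ≤ m ≤ n`,
`Ĉ_{n,j}(ξ) ≥ Ĉ_{m,j}(ξ) − 1`. -/
theorem fellerCycleCount_monotone (ξ : ℕ → ℤ) (hξ : ∀ i, ξ i = 0 ∨ ξ i = 1)
    (j m n : ℕ) (hj : 1 ≤ j) (hjm : j ≤ m) (hmn : m ≤ n) :
    fellerCycleCount ξ m j - 1 ≤ fellerCycleCount ξ n j := by
  have h0 : ∀ i, 0 ≤ ξ i := fun i => by rcases hξ i with h | h <;> simp [h]
  have h1 : ∀ i, ξ i ≤ 1 := fun i => by rcases hξ i with h | h <;> simp [h]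
  have hp0 : ∀ k : ℕ, 0 ≤ ∏ l ∈ Finset.Icc 1 (j - 1), (1 - ξ (k + l)) := fun k =>
    Finset.prod_nonneg fun l _ => by linarith [h1 (k + l)]
  have hp1 : ∀ k : ℕ, ∏ l ∈ Finset.Icc 1 (j - 1), (1 - ξ (k + l)) ≤ 1 := fun k =>
    Finset.prod_le_one (fun l _ => by linarith [h1 (k + l)])
      (fun l _ => by linarith [h0 (k + l)])
  unfold fellerCycleCount
  have hsum :
      (∑ i ∈ Finset.Icc 1 (m - j),
          ξ i * (∏ l ∈ Finset.Icc 1 (j - 1), (1 - ξ (i + l))) * ξ (i + j)) ≤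
        ∑ i ∈ Finset.Icc 1 (n - j),
          ξ i * (∏ l ∈ Finset.Icc 1 (j - 1), (1 - ξ (i + l))) * ξ (i + j) :=
    Finset.sum_le_sum_of_subset_of_nonneg
      (Finset.Icc_subset_Icc_right (by omega))
      (fun i _ _ => mul_nonneg (mul_nonneg (h0 i) (hp0 i)) (h0 (i + j)))
  have hBm : ξ (m - j + 1) * ∏ l ∈ Finset.Icc 1 (j - 1), (1 - ξ (m - j + 1 + l)) ≤ 1 :=
    mul_le_one₀ (h1 _) (hp0 _) (hp1 _)
  have hBn : 0 ≤ ξ (n - j + 1) * ∏ l ∈ Finset.Icc 1 (j - 1), (1 - ξ (n - j + 1 + l)) :=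
    mul_nonneg (h0 _) (hp0 _)
  linarith
end
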